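/- arXiv:0903.2648 — 4 statements merged into one kernel-verified Lean document; each statement's English description precedes it below -/
import Mathlib

section
/- Let D ⊆ ℂ be a connected open set that is invariant both under complex conjugation and under x ↦ -conj(x), and let α : ℂ → ℂ be analytic on D. Define R²(x,z) = (z - α(x))·(z - conj(α(conj(x)))) for x ∈ D, z ∈ ℂ. Then the identity R²(-conj(x), -conj(z)) = conj(R²(x,z)) holds for all x ∈ D and all z ∈ ℂ if and only if either α is odd on D (α(-x) = -α(x) for all x ∈ D) or α satisfies α(-conj(x)) = -conj(α(x)) for all x ∈ D. -/
open Complex ComplexConjugate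

/-!
Substituting `w = conj z`, both sides of the symmetry are monic quadratics in `w`, with roots
`-α(-x̄), -conj α(-x)` and `conj α(x), α(x̄)`. They agree iff the roots match, which pairs up
as "`α` odd at `x` and at `x̄`" or "`α(-x̄) = -conj α(x)` at `x` and at `x̄`". Pointwise this only
gives that at each `x` one of the two holomorphic functions `α(-x) + α(x)` and
`conj (α (-x̄)) + α(x)` vanishes; as `D` is connected, the identity theorem makes one of them
vanish on all of `D`.
-/

theorem forall_sub_mul_sub_eq_sub_mul_sub_iff {R : Type*} [CommRing R] [NoZeroDivisors R]
    (a b c d : R) :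
    (∀ w, (w - a) * (w - b) = (w - c) * (w - d)) ↔ (a = c ∧ b = d) ∨ (a = d ∧ b = c) := by
  refine ⟨fun h => ?_, ?_⟩
  · have hprod : a * b = c * d := by simpa using h 0
    have hsum : a + b = c + d := by linear_combination hprod - h 1
    have : (a - c) * (a - d) = 0 := by linear_combination a * hsum - hprod
    rcases mul_eq_zero.mp this with hac | had
    · exact .inl ⟨by linear_combination hac, by linear_combination hsum - hac⟩
    · exact .inr ⟨by linear_combination had, by linear_combination hsum - had⟩
  · rintro (⟨rfl, rfl⟩ | ⟨rfl, rfl⟩) <;> intro w <;> ring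

theorem conj_eq_neg_iff {R : Type*} [CommRing R] [StarRing R] {a b : R} :
    conj a = -b ↔ a = -conj b :=
  ⟨fun h => by rw [← conj_conj a, h, map_neg], fun h => by rw [h, map_neg, conj_conj]⟩

theorem forall_neg_conj_symm_iff (α : ℂ → ℂ) (x : ℂ) :
    (∀ z, (-conj z - α (-conj x)) * (-conj z - conj (α (conj (-conj x)))) =
        conj ((z - α x) * (z - conj (α (conj x))))) ↔
      (α (-conj x) = -α (conj x) ∧ α (-x) = -α x) ∨
        (α (-conj x) = -conj (α x) ∧ α (-x) = -conj (α (conj x))) := by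
  have hconj : Function.Surjective (conj : ℂ → ℂ) := fun w => ⟨conj w, conj_conj w⟩
  rw [hconj.forall]
  simp only [map_mul, map_sub, map_neg, conj_conj]
  have hsign : ∀ w, (-w - α (-conj x)) * (-w - conj (α (-x))) =
      (w - conj (α x)) * (w - α (conj x)) ↔
      (w - -α (-conj x)) * (w - -conj (α (-x))) = (w - conj (α x)) * (w - α (conj x)) :=
    fun w => ⟨fun h => by linear_combination h, fun h => by linear_combination h⟩
  rw [forall_congr' hsign, forall_sub_mul_sub_eq_sub_mul_sub_iff, or_comm]
  simp only [neg_eq_iff_eq_neg, conj_eq_neg_iff, conj_conj]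

theorem forall_odd_or_forall_conj_odd {D : Set ℂ} (hD : IsOpen D) (hDp : IsPreconnected D)
    (hDneg : ∀ x ∈ D, -x ∈ D) (hDsym : ∀ x ∈ D, -conj x ∈ D) {α : ℂ → ℂ}
    (hα : ∀ x ∈ D, DifferentiableAt ℂ α x)
    (h : ∀ x ∈ D, α (-x) = -α x ∨ α (-conj x) = -conj (α x)) :
    (∀ x ∈ D, α (-x) = -α x) ∨ (∀ x ∈ D, α (-conj x) = -conj (α x)) := by
  set f : ℂ → ℂ := fun x => α (-x) + α x
  -- `g x = conj (α (-conj x) + conj (α x))`, written so that `g` is holomorphic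
  set g : ℂ → ℂ := fun x => (conj ∘ α ∘ conj) (-x) + α x
  have hf_zero (x : ℂ) : f x = 0 ↔ α (-x) = -α x := add_eq_zero_iff_eq_neg
  have hg_zero (x : ℂ) : g x = 0 ↔ α (-conj x) = -conj (α x) := by
    simp only [g, Function.comp_apply, add_eq_zero_iff_eq_neg, conj_eq_neg_iff, map_neg]
  have hf : AnalyticOnNhd ℂ f D := DifferentiableOn.analyticOnNhd (fun x hx =>
    (((hα _ (hDneg x hx)).comp x differentiableAt_id.neg).add
      (hα x hx)).differentiableWithinAt) hD
  have hg : AnalyticOnNhd ℂ g D := DifferentiableOn.analyticOnNhd (fun x hx => by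
    have hrefl := (hα _ (hDsym x hx)).conj_conj
    rw [map_neg, conj_conj] at hrefl
    exact ((hrefl.comp x differentiableAt_id.neg).add (hα x hx)).differentiableWithinAt) hD
  have hfg (x : ℂ) (hx : x ∈ D) : f x * g x = 0 :=
    mul_eq_zero.mpr <| (h x hx).imp (hf_zero x).mpr (hg_zero x).mpr
  exact (hf.eq_zero_or_eq_zero_of_mul_eq_zero hg hfg hDp).imp
    (fun h x hx => (hf_zero x).mp (h x hx)) (fun h x hx => (hg_zero x).mp (h x hx))

/-- Statement 6.3 (symR2): the symmetry `R²(-x̄, -z̄) = conj(R²(x,z))` of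
`R²(x,z) = (z - α(x))(z - conj(α(x̄)))` holds for all `x ∈ D`, `z ∈ ℂ` if and only if
`α` is odd on `D` or `α` satisfies `α(-x̄) = -conj(α(x))` on `D`. -/
theorem stmt_2 (D : Set ℂ) (hD : IsOpen D) (hconn : IsConnected D)
    (hDconj : ∀ x ∈ D, conj x ∈ D) (hDsym : ∀ x ∈ D, -(conj x) ∈ D)
    (α : ℂ → ℂ) (hα : ∀ x ∈ D, DifferentiableAt ℂ α x)
    (R2 : ℂ → ℂ → ℂ)
    (hR2 : ∀ x z : ℂ, R2 x z = (z - α x) * (z - conj (α (conj x)))) :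
    (∀ x ∈ D, ∀ z : ℂ, R2 (-(conj x)) (-(conj z)) = conj (R2 x z)) ↔
      ((∀ x ∈ D, α (-x) = -α x) ∨ (∀ x ∈ D, α (-(conj x)) = -conj (α x))) := by
  have hDneg : ∀ x ∈ D, -x ∈ D := fun x hx => by simpa using hDsym _ (hDconj x hx)
  simp only [hR2, forall_neg_conj_symm_iff]
  constructor
  · intro h
    exact forall_odd_or_forall_conj_odd hD hconn.isPreconnected hDneg hDsym hα
      fun x hx => (h x hx).imp And.right And.left
  · rintro (hodd | hconj_odd) x hx
    · exact .inl ⟨hodd _ (hDconj x hx), hodd x hx⟩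
    · exact .inr ⟨hconj_odd x hx, by simpa using hconj_odd _ (hDconj x hx)⟩
end

section
/- Let γ : [0,1] → ℂ be continuously differentiable, let f : ℂ → ℂ be continuous on the image of γ, let z, β ∈ ℂ with z not in the image of γ, let U ⊆ ℂ be open and α₀ ∈ U with (z - α₀)(z - β) ≠ 0. Suppose ρ : U × [0,1] → ℂ is continuous, for each fixed t ∈ [0,1] the map α ↦ ρ(α,t) is complex-differentiable on U, and ρ(α,t)² = (γ(t) - α)(γ(t) - β) with ρ(α,t) ≠ 0 for all (α,t) ∈ U × [0,1]. Suppose R : U → ℂ is complex-differentiable at α₀ and R(α)² = (z - α)(z - β) on U. Define g(α) = (R(α)/(4πi)) · ∫₀¹ f(γ(t)) γ'(t) / ((γ(t) - z) ρ(α,t)) dt. Then g is complex-differentiable at α₀ with g'(α₀) = -(R(α₀)/(8πi(z - α₀))) · ∫₀¹ f(γ(t)) γ'(t) / ((γ(t) - α₀) ρ(α₀,t)) dt. In particular, if the modulation integral ∫₀¹ f(γ(t)) γ'(t) / ((γ(t) - α₀) ρ(α₀,t)) dt vanishes, then g'(α₀) = 0. -/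
/-!
Differentiating `ρ(α, t)² = (γ t - α)(γ t - β)` in `α` gives `∂_α ρ = -ρ / (2 (γ t - α))`, and in
the same way `R' = -R / (2 (z - α))`. The `α`-derivative of the integrand is continuous on a
compact neighbourhood, so it may be taken under the integral; after the partial fraction
decomposition `1 / ((γ - z)(γ - α)) = (1 / (γ - z) - 1 / (γ - α)) / (z - α)` it equals
`(∫ f γ' / ((γ - z) ρ) - ∫ f γ' / ((γ - α) ρ)) / (2 (z - α))`. In the product rule for `g` the
first of these integrals cancels against the term coming from `R'`, and only the modulation
integral survives.
-/

open Set Filter Topology MeasureTheory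
open scoped Interval

theorem hasDerivAt_intervalIntegral_of_continuousOn
    {𝕜 E : Type*} [RCLike 𝕜] [NormedAddCommGroup E] [NormedSpace ℝ E] [NormedSpace 𝕜 E]
    {F F' : 𝕜 → ℝ → E} {U : Set 𝕜} {x₀ : 𝕜} {a b : ℝ} (hU : U ∈ 𝓝 x₀)
    (hF : ∀ x ∈ U, ContinuousOn (F x) [[a, b]])
    (hF' : ContinuousOn (Function.uncurry F') (U ×ˢ [[a, b]]))
    (hderiv : ∀ t ∈ [[a, b]], ∀ x ∈ U, HasDerivAt (F · t) (F' x t) x) :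
    HasDerivAt (fun x => ∫ t in a..b, F x t) (∫ t in a..b, F' x₀ t) x₀ := by
  have hx₀ : x₀ ∈ U := mem_of_mem_nhds hU
  obtain ⟨ε, hε, hεU⟩ := Metric.nhds_basis_closedBall.mem_iff.1 hU
  obtain ⟨C, hC⟩ := ((isCompact_closedBall x₀ ε).prod isCompact_uIcc).exists_bound_of_continuousOn
    (hF'.mono (prod_mono hεU subset_rfl))
  have hF'x₀ : ContinuousOn (F' x₀) [[a, b]] :=
    hF'.comp (continuous_const.prodMk continuous_id).continuousOn fun t ht => ⟨hx₀, ht⟩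
  refine (intervalIntegral.hasDerivAt_integral_of_dominated_loc_of_deriv_le
    (bound := fun _ => C) (Metric.closedBall_mem_nhds x₀ hε) ?_ (hF x₀ hx₀).intervalIntegrable
    (hF'x₀.mono uIoc_subset_uIcc |>.aestronglyMeasurable measurableSet_uIoc) ?_
    intervalIntegrable_const ?_).2
  · filter_upwards [hU] with x hx
    exact ((hF x hx).mono uIoc_subset_uIcc).aestronglyMeasurable measurableSet_uIoc
  · exact ae_of_all _ fun t ht x hx => hC (x, t) ⟨hx, uIoc_subset_uIcc ht⟩
  · exact ae_of_all _ fun t ht x hx => hderiv t (uIoc_subset_uIcc ht) x (hεU hx)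

section SquareRootBranch

variable {𝕜 : Type*} [NontriviallyNormedField 𝕜] {s : 𝕜 → 𝕜} {a b c β x : 𝕜}

theorem hasDerivAt_of_sq_eq_sub_mul_sub (hs : DifferentiableAt 𝕜 s x)
    (hsq : ∀ᶠ α in 𝓝 x, s α ^ 2 = (c - α) * (c - β)) (hx : s x ≠ 0) :
    HasDerivAt s (-s x / (2 * (c - x))) x := by
  have hsq_deriv : HasDerivAt (fun α => s α ^ 2) (-(c - β)) x :=
    (by simpa using ((hasDerivAt_id x).const_sub c).mul_const (c - β) :
      HasDerivAt (fun α => (c - α) * (c - β)) (-(c - β)) x).congr_of_eventuallyEq hsq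
  have hchain : 2 * s x * deriv s x = -(c - β) :=
    (by simpa [mul_comm] using hs.hasDerivAt.fun_pow 2 : HasDerivAt (fun α => s α ^ 2) _ x).unique
      hsq_deriv
  have hsx : s x = -deriv s x * (2 * (c - x)) :=
    mul_left_cancel₀ hx (by linear_combination (c - x) * hchain + hsq.self_of_nhds)
  have h2cx : 2 * (c - x) ≠ 0 := fun h => hx (by simp [hsx, h])
  refine hs.hasDerivAt.congr_deriv ?_
  rw [hsx, neg_mul, neg_neg, mul_div_cancel_right₀ _ h2cx]

theorem hasDerivAt_div_mul_of_sq_eq_sub_mul_sub (hs : DifferentiableAt 𝕜 s x)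
    (hsq : ∀ᶠ α in 𝓝 x, s α ^ 2 = (c - α) * (c - β)) (hx : s x ≠ 0) :
    HasDerivAt (fun α => a / (b * s α)) (a / (b * (2 * (c - x) * s x))) x := by
  have hcx : c - x ≠ 0 := left_ne_zero_of_mul (hsq.self_of_nhds ▸ pow_ne_zero 2 hx)
  have hrewrite : (fun α => a / (b * s α)) = fun α => a / b * (s α)⁻¹ := by
    funext α; rw [mul_comm b, div_mul_eq_div_div_swap, div_eq_mul_inv]
  rw [hrewrite]
  refine (((hasDerivAt_of_sq_eq_sub_mul_sub hs hsq hx).fun_inv hx).const_mul (a / b)).congr_deriv ?_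
  field_simp

end SquareRootBranch

section PlemeljIntegral

variable {γ φ : ℝ → ℂ} {ρ : ℂ → ℝ → ℂ} {U : Set ℂ} {a b : ℝ} {z w β α₀ : ℂ}

theorem continuousOn_div_sub_mul (hφ : ContinuousOn φ [[a, b]]) (hγ : ContinuousOn γ [[a, b]])
    (hw : ∀ t ∈ [[a, b]], γ t ≠ w) {α : ℂ} (hρ : ContinuousOn (ρ α) [[a, b]])
    (hρne : ∀ t ∈ [[a, b]], ρ α t ≠ 0) :
    ContinuousOn (fun t => φ t / ((γ t - w) * ρ α t)) [[a, b]] :=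
  hφ.div ((hγ.sub continuousOn_const).mul hρ)
    fun t ht => mul_ne_zero (sub_ne_zero.2 (hw t ht)) (hρne t ht)

theorem hasDerivAt_integral_div_sub_mul (hU : IsOpen U) (hα₀ : α₀ ∈ U)
    (hφ : ContinuousOn φ [[a, b]]) (hγ : ContinuousOn γ [[a, b]])
    (hz : ∀ t ∈ [[a, b]], γ t ≠ z) (hzα₀ : z ≠ α₀)
    (hρcont : ContinuousOn (fun p : ℂ × ℝ => ρ p.1 p.2) (U ×ˢ [[a, b]]))
    (hρdiff : ∀ t ∈ [[a, b]], DifferentiableOn ℂ (fun α => ρ α t) U)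
    (hρsq : ∀ α ∈ U, ∀ t ∈ [[a, b]], ρ α t ^ 2 = (γ t - α) * (γ t - β))
    (hρne : ∀ α ∈ U, ∀ t ∈ [[a, b]], ρ α t ≠ 0) :
    HasDerivAt (fun α => ∫ t in a..b, φ t / ((γ t - z) * ρ α t))
      ((2 * (z - α₀))⁻¹ * ((∫ t in a..b, φ t / ((γ t - z) * ρ α₀ t)) -
        ∫ t in a..b, φ t / ((γ t - α₀) * ρ α₀ t))) α₀ := by
  have hγα : ∀ α ∈ U, ∀ t ∈ [[a, b]], γ t - α ≠ 0 := fun α hα t ht =>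
    left_ne_zero_of_mul (hρsq α hα t ht ▸ pow_ne_zero 2 (hρne α hα t ht))
  have hρslice : ∀ α ∈ U, ContinuousOn (ρ α) [[a, b]] := fun α hα =>
    hρcont.comp (continuous_const.prodMk continuous_id).continuousOn fun t ht => ⟨hα, ht⟩
  have hF α (hα : α ∈ U) := continuousOn_div_sub_mul hφ hγ hz (hρslice α hα) (hρne α hα)
  have hsnd : MapsTo Prod.snd (U ×ˢ [[a, b]]) [[a, b]] := fun p hp => hp.2
  have hF' : ContinuousOn (Function.uncurry fun α t =>
      φ t / ((γ t - z) * (2 * (γ t - α) * ρ α t))) (U ×ˢ [[a, b]]) :=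
    (hφ.comp continuousOn_snd hsnd).div
      (((hγ.comp continuousOn_snd hsnd).sub continuousOn_const).mul
        ((continuousOn_const.mul ((hγ.comp continuousOn_snd hsnd).sub continuousOn_fst)).mul
          hρcont))
      fun p hp => mul_ne_zero (sub_ne_zero.2 (hz p.2 hp.2))
        (mul_ne_zero (mul_ne_zero two_ne_zero (hγα p.1 hp.1 p.2 hp.2)) (hρne p.1 hp.1 p.2 hp.2))
  have hderiv := hasDerivAt_intervalIntegral_of_continuousOn (hU.mem_nhds hα₀) hF hF'
    fun t ht x hx => hasDerivAt_div_mul_of_sq_eq_sub_mul_sub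
      ((hρdiff t ht).differentiableAt (hU.mem_nhds hx))
      (eventually_of_mem (hU.mem_nhds hx) fun α hα => hρsq α hα t ht) (hρne x hx t ht)
  have hJ := continuousOn_div_sub_mul hφ hγ (fun t ht h => hγα α₀ hα₀ t ht (sub_eq_zero.2 h))
    (hρslice α₀ hα₀) (hρne α₀ hα₀)
  refine hderiv.congr_deriv ?_
  rw [← intervalIntegral.integral_sub (hF α₀ hα₀).intervalIntegrable hJ.intervalIntegrable,
    ← intervalIntegral.integral_const_mul]
  refine intervalIntegral.integral_congr fun t ht => ?_
  have := sub_ne_zero.2 (hz t ht)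
  have := hγα α₀ hα₀ t ht
  have := sub_ne_zero.2 hzα₀
  field_simp
  ring

end PlemeljIntegral

/-- Proposition 3.1: the Plemelj-formula solution
`g(α) = (R(α)/(4πi)) ∫₀¹ f(γ(t))γ'(t)/((γ(t)-z)ρ(α,t)) dt` of the scalar RHP has derivative
`g'(α₀) = -(R(α₀)/(8πi(z-α₀))) ∫₀¹ f(γ(t))γ'(t)/((γ(t)-α₀)ρ(α₀,t)) dt` in the endpoint `α`;
in particular, `g'(α₀) = 0` when the modulation integral vanishes. -/
theorem stmt_4
    (γ γ' : ℝ → ℂ)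
    (hγ : ∀ t ∈ Set.Icc (0:ℝ) 1, HasDerivAt γ (γ' t) t)
    (hγ' : ContinuousOn γ' (Set.Icc (0:ℝ) 1))
    (f : ℂ → ℂ) (hf : ContinuousOn f (γ '' Set.Icc (0:ℝ) 1))
    (z β : ℂ) (hz : z ∉ γ '' Set.Icc (0:ℝ) 1)
    (U : Set ℂ) (hU : IsOpen U) (α₀ : ℂ) (hα₀ : α₀ ∈ U)
    (h0 : (z - α₀) * (z - β) ≠ 0)
    (ρ : ℂ → ℝ → ℂ)
    (hρcont : ContinuousOn (fun p : ℂ × ℝ => ρ p.1 p.2) (U ×ˢ Set.Icc (0:ℝ) 1))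
    (hρdiff : ∀ t ∈ Set.Icc (0:ℝ) 1, DifferentiableOn ℂ (fun α => ρ α t) U)
    (hρsq : ∀ α ∈ U, ∀ t ∈ Set.Icc (0:ℝ) 1, (ρ α t) ^ 2 = (γ t - α) * (γ t - β))
    (hρne : ∀ α ∈ U, ∀ t ∈ Set.Icc (0:ℝ) 1, ρ α t ≠ 0)
    (R : ℂ → ℂ) (hR : DifferentiableAt ℂ R α₀)
    (hRsq : ∀ α ∈ U, (R α) ^ 2 = (z - α) * (z - β))
    (g : ℂ → ℂ)
    (hg : ∀ α : ℂ, g α = R α / (4 * Real.pi * Complex.I) *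
        ∫ t in (0:ℝ)..1, f (γ t) * γ' t / ((γ t - z) * ρ α t)) :
    HasDerivAt g
      (-(R α₀ / (8 * Real.pi * Complex.I * (z - α₀))) *
        ∫ t in (0:ℝ)..1, f (γ t) * γ' t / ((γ t - α₀) * ρ α₀ t)) α₀ ∧
    ((∫ t in (0:ℝ)..1, f (γ t) * γ' t / ((γ t - α₀) * ρ α₀ t)) = 0 →
      HasDerivAt g 0 α₀) := by
  rw [← uIcc_of_le zero_le_one] at *
  have hzα₀ : z - α₀ ≠ 0 := left_ne_zero_of_mul h0
  have hγc : ContinuousOn γ [[0, 1]] := fun t ht => (hγ t ht).continuousAt.continuousWithinAt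
  have hI := hasDerivAt_integral_div_sub_mul (φ := fun t => f (γ t) * γ' t) hU hα₀
    ((hf.comp hγc (mapsTo_image γ _)).mul hγ') hγc (fun t ht h => hz ⟨t, ht, h⟩)
    (sub_ne_zero.1 hzα₀) hρcont hρdiff hρsq hρne
  have hR' : HasDerivAt R (-R α₀ / (2 * (z - α₀))) α₀ :=
    hasDerivAt_of_sq_eq_sub_mul_sub hR (eventually_of_mem (hU.mem_nhds hα₀) hRsq)
      fun h => h0 (by rw [← hRsq α₀ hα₀, h, zero_pow two_ne_zero])
  have hg' : HasDerivAt g (-(R α₀ / (8 * Real.pi * Complex.I * (z - α₀))) *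
      ∫ t in (0:ℝ)..1, f (γ t) * γ' t / ((γ t - α₀) * ρ α₀ t)) α₀ := by
    rw [funext hg]
    refine ((hR'.div_const _).mul hI).congr_deriv ?_
    field_simp
    ring
  exact ⟨hg', fun hJ => by simpa [hJ] using hg'⟩
end

section
/- Let μ = 1/(2√2) and let x ∈ ℂ with cosh 2x ≠ 0 and e^{4x} = (1 - 2√2·i)/3. Then α(x)² = -27/32, where α(x) = (μ·sinh 2x + i·cosh 2x)/cosh²2x; equivalently α(x) = ±(3√3/(4√2))·i ≈ ±0.91856·i. -/
/-!
With `w = e^{4x} = (1 - 2√2 i)/3` one has `|w| = 1`, so `e^{-4x} = w̄` and hence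
`cosh 4x = 1/3`, `sinh 4x = -2√2 i/3`. The half-angle formulas give `cosh² 2x = 2/3`,
`sinh² 2x = -1/3` and `sinh 2x cosh 2x = -√2 i/3`; expanding the square of `α(x)` in these
quantities yields `α(x)² = (-3/8)/(4/9) = -27/32`.
-/

open Complex

namespace Complex

lemma cosh_eq_of_exp_eq {z w : ℂ} (h : exp z = w) : cosh z = (w + w⁻¹) / 2 := by
  rw [cosh, exp_neg, h]

lemma sinh_eq_of_exp_eq {z w : ℂ} (h : exp z = w) : sinh z = (w - w⁻¹) / 2 := by
  rw [sinh, exp_neg, h]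

lemma ofReal_sqrt_two_sq : ((√2 : ℝ) : ℂ) ^ 2 = 2 := by
  rw [← ofReal_pow, Real.sq_sqrt zero_le_two, ofReal_ofNat]

lemma inv_one_sub_two_sqrt_two_mul_I_div_three :
    ((1 - 2 * (√2 : ℂ) * I) / 3)⁻¹ = (1 + 2 * (√2 : ℂ) * I) / 3 := by
  apply inv_eq_of_mul_eq_one_right
  linear_combination (-4 / 9 * I ^ 2) * ofReal_sqrt_two_sq - 8 / 9 * I_sq

end Complex

section RamificationPoint

variable {x : ℂ} (hex : exp (4 * x) = (1 - 2 * (√2 : ℂ) * I) / 3)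
include hex

lemma cosh_four_mul_eq_of_exp_eq : cosh (4 * x) = 1 / 3 := by
  rw [cosh_eq_of_exp_eq hex, inv_one_sub_two_sqrt_two_mul_I_div_three]
  ring

lemma sinh_four_mul_eq_of_exp_eq : sinh (4 * x) = -(2 * (√2 : ℂ) * I) / 3 := by
  rw [sinh_eq_of_exp_eq hex, inv_one_sub_two_sqrt_two_mul_I_div_three]
  ring

lemma cosh_two_mul_sq_eq_of_exp_eq : cosh (2 * x) ^ 2 = 2 / 3 := by
  have h4 := cosh_four_mul_eq_of_exp_eq hex
  rw [show 4 * x = 2 * (2 * x) by ring, cosh_two_mul] at h4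
  linear_combination (h4 + cosh_sq_sub_sinh_sq (2 * x)) / 2

lemma sinh_two_mul_sq_eq_of_exp_eq : sinh (2 * x) ^ 2 = -1 / 3 := by
  have h4 := cosh_four_mul_eq_of_exp_eq hex
  rw [show 4 * x = 2 * (2 * x) by ring, cosh_two_mul] at h4
  linear_combination (h4 - cosh_sq_sub_sinh_sq (2 * x)) / 2

lemma sinh_two_mul_mul_cosh_two_mul_eq_of_exp_eq :
    sinh (2 * x) * cosh (2 * x) = -((√2 : ℂ) * I) / 3 := by
  have h4 := sinh_four_mul_eq_of_exp_eq hex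
  rw [show 4 * x = 2 * (2 * x) by ring, sinh_two_mul] at h4
  linear_combination h4 / 2

lemma log_point_sq_eq_of_exp_eq :
    ((((1 / (2 * √2) : ℝ) : ℂ) * sinh (2 * x) + I * cosh (2 * x)) / cosh (2 * x) ^ 2) ^ 2
      = -27 / 32 := by
  have hμ : ((1 / (2 * √2) : ℝ) : ℂ) = (√2 : ℂ) / 4 := by
    have : (√2 : ℂ) ≠ 0 := ofReal_ne_zero.mpr (by positivity)
    push_cast
    field_simp
    linear_combination -2 * ofReal_sqrt_two_sq
  rw [hμ, div_pow, cosh_two_mul_sq_eq_of_exp_eq hex]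
  linear_combination (-3 / 64 - 3 / 8 * I ^ 2) * ofReal_sqrt_two_sq
    + (9 / 4 * I ^ 2) * cosh_two_mul_sq_eq_of_exp_eq hex
    + (9 / 64 * (√2 : ℂ) ^ 2) * sinh_two_mul_sq_eq_of_exp_eq hex
    + (9 / 8 * (√2 : ℂ) * I) * sinh_two_mul_mul_cosh_two_mul_eq_of_exp_eq hex
    + 3 / 4 * I_sq

end RamificationPoint

lemma ofReal_three_sqrt_three_div_four_sqrt_two_mul_I_sq :
    (((3 * √3 / (4 * √2) : ℝ) : ℂ) * I) ^ 2 = -27 / 32 := by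
  have h : (3 * √3 / (4 * √2) : ℝ) ^ 2 = 27 / 32 := by
    rw [div_pow, mul_pow, mul_pow, Real.sq_sqrt (by norm_num), Real.sq_sqrt zero_le_two]
    norm_num
  rw [mul_pow, I_sq, ← ofReal_pow, h]
  norm_num

theorem stmt_13_general (x : ℂ)
    (hex : Complex.exp (4 * x) = (1 - 2 * (Real.sqrt 2 : ℂ) * Complex.I) / 3)
    (α : ℂ)
    (hα : α = (((1 / (2 * Real.sqrt 2) : ℝ) : ℂ) * Complex.sinh (2 * x) +
        Complex.I * Complex.cosh (2 * x)) / (Complex.cosh (2 * x)) ^ 2) :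
    α ^ 2 = -27 / 32 ∧
      (α = ((3 * Real.sqrt 3 / (4 * Real.sqrt 2) : ℝ) : ℂ) * Complex.I ∨
        α = -(((3 * Real.sqrt 3 / (4 * Real.sqrt 2) : ℝ) : ℂ) * Complex.I)) := by
  have hsq : α ^ 2 = -27 / 32 := hα ▸ log_point_sq_eq_of_exp_eq hex
  exact ⟨hsq, sq_eq_sq_iff_eq_or_eq_neg.mp
    (hsq.trans ofReal_three_sqrt_three_div_four_sqrt_two_mul_I_sq.symm)⟩

/-- Section 7.3: at the critical phase strength `μ* = 1/(2√2)`, the ramification point with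
`e^{4x} = (1 - 2√2 i)/3` is mapped to the log point `α(x) = ±(3√3/(4√2)) i`, i.e.
`α(x)² = -27/32`. -/
theorem stmt_13 (x : ℂ) (hx : Complex.cosh (2 * x) ≠ 0)
    (hex : Complex.exp (4 * x) = (1 - 2 * (Real.sqrt 2 : ℂ) * Complex.I) / 3)
    (α : ℂ)
    (hα : α = (((1 / (2 * Real.sqrt 2) : ℝ) : ℂ) * Complex.sinh (2 * x) +
        Complex.I * Complex.cosh (2 * x)) / (Complex.cosh (2 * x)) ^ 2) :
    α ^ 2 = -27 / 32 ∧
      (α = ((3 * Real.sqrt 3 / (4 * Real.sqrt 2) : ℝ) : ℂ) * Complex.I ∨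
        α = -(((3 * Real.sqrt 3 / (4 * Real.sqrt 2) : ℝ) : ℂ) * Complex.I)) :=
  stmt_13_general x hex α hα
end

section
/- Let 0 < k₁ < k₂ ≤ 1 be real and let u₁, u₂ ∈ (0,1) satisfy u₁³ + 2k₁u₁² - 2k₁ = 0 and u₂³ + 2k₂u₂² - 2k₂ = 0. Then u₁ < u₂, i.e. the unique root u(k) ∈ (0,1) of u³ + 2ku² - 2k = 0 is a strictly increasing function of k on (0,1]. -/
/-!
Solving the cubic for `k` gives `k = u³ / (2(1 - u²))` whenever `u² ≠ 1`, so the root `u(k)`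
is the inverse of this function of `u`, which is strictly increasing on `[0, 1)`.
-/

open Set

noncomputable def paramOfRoot (u : ℝ) : ℝ := u ^ 3 / (2 * (1 - u ^ 2))

theorem paramOfRoot_eq {k u : ℝ} (hu : u ^ 2 ≠ 1) (h : u ^ 3 + 2 * k * u ^ 2 - 2 * k = 0) :
    paramOfRoot u = k := by
  have : 2 * (1 - u ^ 2) ≠ 0 := mul_ne_zero two_ne_zero (sub_ne_zero.mpr hu.symm)
  rw [paramOfRoot, div_eq_iff this]
  linear_combination h

theorem strictMonoOn_paramOfRoot : StrictMonoOn paramOfRoot (Ico 0 1) := by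
  rintro a ⟨ha0, ha1⟩ b ⟨hb0, hb1⟩ hab
  have ha : 0 < 1 - a ^ 2 := by nlinarith
  have hb : 0 < 1 - b ^ 2 := by nlinarith
  have hcube : a ^ 3 < b ^ 3 := pow_lt_pow_left₀ hab ha0 three_ne_zero
  rw [paramOfRoot, paramOfRoot, div_lt_div_iff₀ (by positivity) (by positivity)]
  calc a ^ 3 * (2 * (1 - b ^ 2)) ≤ a ^ 3 * (2 * (1 - a ^ 2)) := by gcongr
    _ < b ^ 3 * (2 * (1 - a ^ 2)) := by gcongr

theorem stmt_17_general (k₁ k₂ u₁ u₂ : ℝ) (hk : k₁ < k₂)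
    (hu₁ : u₁ ∈ Set.Ioo (0:ℝ) 1) (hu₂ : u₂ ∈ Set.Ioo (0:ℝ) 1)
    (h₁ : u₁ ^ 3 + 2 * k₁ * u₁ ^ 2 - 2 * k₁ = 0)
    (h₂ : u₂ ^ 3 + 2 * k₂ * u₂ ^ 2 - 2 * k₂ = 0) :
    u₁ < u₂ := by
  have hsq {u : ℝ} (hu : u ∈ Ioo (0 : ℝ) 1) : u ^ 2 ≠ 1 := by
    nlinarith [hu.1, hu.2]
  rw [← paramOfRoot_eq (hsq hu₁) h₁, ← paramOfRoot_eq (hsq hu₂) h₂] at hk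
  exact (strictMonoOn_paramOfRoot.lt_iff_lt (Ioo_subset_Ico_self hu₁)
    (Ioo_subset_Ico_self hu₂)).mp hk

/-- Section 7.4: the unique root `u(k) ∈ (0,1)` of `u³ + 2ku² - 2k = 0` is strictly
increasing in `k` on `(0, 1]`. -/
theorem stmt_17 (k₁ k₂ u₁ u₂ : ℝ) (hk₁ : 0 < k₁) (hk : k₁ < k₂) (hk₂ : k₂ ≤ 1)
    (hu₁ : u₁ ∈ Set.Ioo (0:ℝ) 1) (hu₂ : u₂ ∈ Set.Ioo (0:ℝ) 1)
    (h₁ : u₁ ^ 3 + 2 * k₁ * u₁ ^ 2 - 2 * k₁ = 0)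
    (h₂ : u₂ ^ 3 + 2 * k₂ * u₂ ^ 2 - 2 * k₂ = 0) :
    u₁ < u₂ :=
  stmt_17_general k₁ k₂ u₁ u₂ hk hu₁ hu₂ h₁ h₂
end
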